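/- For any two policies π' and π, with ε^{π'} = max_s |E_{a∼π'(·|s)}[A^π(s,a)]|, the following lower bound holds: J(π') - J(π) ≥ (1/(1-γ)) · E_{s∼d^π, a∼π'(·|s)}[A^π(s,a) - (2γ ε^{π'}/(1-γ)) D_TV(π'‖π)[s]]. -/

import Mathlib

open BigOperators Finset Matrix

noncomputable section

variable {S A : Type*}

/-- Policy transition matrix (column-stochastic): entry `(s', s)` is
`P_pol(s'|s) = ∑ a, P(s'|s,a) pol(a|s)`. -/
def Pmat [Fintype A] (P : S → A → S → ℝ) (pol : S → A → ℝ) : Matrix S S ℝ :=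
  fun s' s => ∑ a, P s a s' * pol s a

/-- Discounted future state distribution `d^π = (1-γ) ∑_t γ^t P_π^t μ`. -/
def dFut [Fintype S] [DecidableEq S] [Fintype A] (γ : ℝ) (P : S → A → S → ℝ)
    (μ : S → ℝ) (pol : S → A → ℝ) : S → ℝ :=
  fun s => (1 - γ) * ∑' t : ℕ, γ ^ t * ((Pmat P pol ^ t) *ᵥ μ) s

/-- Discounted return `J(π)` (also used as the cost return `J_C(π)` with a cost `C`
in place of the reward `R`). -/
def Jret [Fintype S] [DecidableEq S] [Fintype A] (γ : ℝ) (P : S → A → S → ℝ)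
    (R : S → A → S → ℝ) (μ : S → ℝ) (pol : S → A → ℝ) : ℝ :=
  (1 / (1 - γ)) * ∑ s, dFut γ P μ pol s * (∑ a, pol s a * (∑ s', P s a s' * R s a s'))

/-- Total variational divergence between action distributions at state `s`. -/
def DTV [Fintype A] (pol' pol : S → A → ℝ) (s : S) : ℝ :=
  (1 / 2) * ∑ a, |pol' s a - pol s a|

/-- Kullback–Leibler divergence between action distributions at state `s`. -/
def DKL [Fintype A] (pol' pol : S → A → ℝ) (s : S) : ℝ :=
  ∑ a, pol' s a * Real.log (pol' s a / pol s a)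

/-- Advantage function `A^π(s,a) = Q^π(s,a) - V^π(s)` built from a value function `V`
(also used for cost advantages with a cost `C` in place of `R`). -/
def Adv [Fintype S] (γ : ℝ) (P : S → A → S → ℝ) (R : S → A → S → ℝ)
    (V : S → ℝ) (s : S) (a : A) : ℝ :=
  (∑ s', P s a s' * (R s a s' + γ * V s')) - V s

/-- `ε_f^{π'} = max_s |E_{a∼π'(·|s), s'∼P}[δ_f(s,a,s')]|` where
`δ_f(s,a,s') = R(s,a,s') + γ f(s') - f(s)`. -/
def epsF [Fintype S] [Fintype A] (γ : ℝ) (P : S → A → S → ℝ) (R : S → A → S → ℝ)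
    (f : S → ℝ) (pol' : S → A → ℝ) : ℝ :=
  ⨆ s, |∑ a, pol' s a * (∑ s', P s a s' * (R s a s' + γ * f s' - f s))|

/-- Surrogate `L_{π,f}(π') = E_{s∼d^π, a∼π, s'∼P}[(π'(a|s)/π(a|s) - 1) δ_f(s,a,s')]`. -/
def Lsurr [Fintype S] [DecidableEq S] [Fintype A] (γ : ℝ) (P : S → A → S → ℝ)
    (R : S → A → S → ℝ) (μ : S → ℝ) (f : S → ℝ) (pol pol' : S → A → ℝ) : ℝ :=
  ∑ s, dFut γ P μ pol s * (∑ a, pol s a * (∑ s', P s a s' *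
    ((pol' s a / pol s a - 1) * (R s a s' + γ * f s' - f s))))

/-
By the performance difference lemma, for any `V`,
`J(q) = E_μ[V] + (1/(1-γ)) E_{s∼d^q}[E_{a∼q}[A_V(s,a)]]`; since `π` has zero expected advantage
under its own value function, `J(π') - J(π) = (1/(1-γ)) E_{s∼d^{π'}}[ḡ]` with
`ḡ(s) = E_{a∼π'}[A^π(s,a)]`, and replacing `d^{π'}` by `d^π` costs at most
`ε^{π'} ‖d^{π'} - d^π‖₁`. The discounted distributions solve `d = (1-γ)μ + γ P_π d`, so
`d^{π'} - d^π = γ P_{π'}(d^{π'} - d^π) + γ (P_{π'} - P_π) d^π`. As `P_{π'}` is an `ℓ¹`-contraction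
and the `s`-th column of `P_{π'} - P_π` has `ℓ¹`-norm at most `2 D_TV(π'‖π)[s]`, this gives
`(1-γ) ‖d^{π'} - d^π‖₁ ≤ 2γ E_{s∼d^π}[D_TV(π'‖π)[s]]`.
-/

theorem sum_mul_le_iSup_abs_mul_sum_abs {ι : Type*} [Fintype ι] (x g : ι → ℝ) :
    ∑ i, x i * g i ≤ (⨆ i, |g i|) * ∑ i, |x i| :=
  calc ∑ i, x i * g i ≤ ∑ i, |x i| * |g i| :=
        sum_le_sum fun i _ => (le_abs_self _).trans_eq (abs_mul _ _)
    _ ≤ ∑ i, |x i| * ⨆ i, |g i| :=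
        sum_le_sum fun i _ => mul_le_mul_of_nonneg_left
          (le_ciSup (f := fun i => |g i|) (Set.finite_range _).bddAbove i) (abs_nonneg _)
    _ = (⨆ i, |g i|) * ∑ i, |x i| := by rw [← sum_mul, mul_comm]

namespace Matrix

variable {m n : Type*} [Fintype m] [Fintype n]

theorem sum_abs_mulVec_le (N : Matrix m n ℝ) (x : n → ℝ) :
    ∑ i, |(N *ᵥ x) i| ≤ ∑ j, (∑ i, |N i j|) * |x j| :=
  calc ∑ i, |(N *ᵥ x) i| ≤ ∑ i, ∑ j, |N i j| * |x j| :=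
        sum_le_sum fun i _ => (abs_sum_le_sum_abs _ _).trans_eq (by simp_rw [abs_mul])
    _ = ∑ j, (∑ i, |N i j|) * |x j| := by rw [sum_comm]; simp_rw [sum_mul]

variable [DecidableEq n] {M : Matrix n n ℝ}

theorem sum_abs_mulVec_le_of_mem_colStochastic (hM : M ∈ colStochastic ℝ n) (x : n → ℝ) :
    ∑ i, |(M *ᵥ x) i| ≤ ∑ i, |x i| := by
  refine (sum_abs_mulVec_le M x).trans_eq (sum_congr rfl fun j _ => ?_)
  simp_rw [abs_of_nonneg (nonneg_of_mem_colStochastic hM), sum_col_of_mem_colStochastic hM,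
    one_mul]

theorem abs_pow_mulVec_le_of_mem_colStochastic (hM : M ∈ colStochastic ℝ n) (x : n → ℝ)
    (t : ℕ) (s : n) : |(M ^ t *ᵥ x) s| ≤ ∑ i, |x i| :=
  (single_le_sum (fun i _ => abs_nonneg ((M ^ t *ᵥ x) i)) (mem_univ s)).trans
    (sum_abs_mulVec_le_of_mem_colStochastic (pow_mem hM t) x)

theorem summable_geometric_pow_mulVec (hM : M ∈ colStochastic ℝ n) {γ : ℝ} (hγ : |γ| < 1)
    (x : n → ℝ) (s : n) : Summable fun t : ℕ => γ ^ t * (M ^ t *ᵥ x) s := by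
  refine Summable.of_norm_bounded
    ((summable_geometric_of_lt_one (abs_nonneg γ) hγ).mul_right (∑ i, |x i|)) fun t => ?_
  rw [Real.norm_eq_abs, abs_mul, abs_pow]
  exact mul_le_mul_of_nonneg_left (abs_pow_mulVec_le_of_mem_colStochastic hM x t s)
    (pow_nonneg (abs_nonneg γ) t)

theorem tsum_geometric_pow_mulVec_eq (hM : M ∈ colStochastic ℝ n) {γ : ℝ} (hγ : |γ| < 1)
    (x : n → ℝ) (s : n) :
    ∑' t : ℕ, γ ^ t * (M ^ t *ᵥ x) s
      = x s + γ * (M *ᵥ fun i => ∑' t : ℕ, γ ^ t * (M ^ t *ᵥ x) i) s := by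
  have hsum := summable_geometric_pow_mulVec hM hγ x
  have hshift : ∀ t : ℕ, γ ^ (t + 1) * (M ^ (t + 1) *ᵥ x) s
      = γ * ∑ i, M s i * (γ ^ t * (M ^ t *ᵥ x) i) := by
    intro t
    rw [pow_succ' γ, pow_succ' M, ← mulVec_mulVec, mul_assoc]
    exact congrArg (γ * ·) ((mul_sum _ _ _).trans (sum_congr rfl fun i _ => mul_left_comm _ _ _))
  rw [(hsum s).tsum_eq_zero_add, pow_zero, one_mul, pow_zero, one_mulVec]
  simp_rw [hshift, tsum_mul_left, Summable.tsum_finsetSum fun i _ => (hsum i).mul_left (M s i),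
    tsum_mul_left]
  rfl

end Matrix

section MDP

variable [Fintype S] [Fintype A] {γ : ℝ} {P : S → A → S → ℝ} {μ : S → ℝ} {pol pol' : S → A → ℝ}

theorem Pmat_mem_colStochastic [DecidableEq S] (hP0 : ∀ s a s', 0 ≤ P s a s')
    (hP1 : ∀ s a, ∑ s', P s a s' = 1) (hpol0 : ∀ s a, 0 ≤ pol s a)
    (hpol1 : ∀ s, ∑ a, pol s a = 1) : Pmat P pol ∈ colStochastic ℝ S := by
  refine mem_colStochastic_iff_sum.2
    ⟨fun s' s => sum_nonneg fun a _ => mul_nonneg (hP0 _ _ _) (hpol0 _ _), fun s => ?_⟩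
  simp only [Pmat]
  rw [sum_comm]
  simp_rw [← sum_mul, hP1, one_mul, hpol1]

theorem sum_abs_Pmat_sub_Pmat_le (hP0 : ∀ s a s', 0 ≤ P s a s')
    (hP1 : ∀ s a, ∑ s', P s a s' = 1) (s : S) :
    ∑ s', |Pmat P pol' s' s - Pmat P pol s' s| ≤ 2 * DTV pol' pol s :=
  calc ∑ s', |Pmat P pol' s' s - Pmat P pol s' s|
      = ∑ s', |∑ a, P s a s' * (pol' s a - pol s a)| := by simp [Pmat, mul_sub]
    _ ≤ ∑ s', ∑ a, P s a s' * |pol' s a - pol s a| := sum_le_sum fun s' _ =>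
        (abs_sum_le_sum_abs _ _).trans_eq (by simp_rw [abs_mul, abs_of_nonneg (hP0 _ _ _)])
    _ = 2 * DTV pol' pol s := by
        rw [sum_comm, DTV]
        simp_rw [← sum_mul, hP1, one_mul]
        ring

theorem sum_mul_Adv_eq (hpol1 : ∀ s, ∑ a, pol s a = 1) (R : S → A → S → ℝ) (V : S → ℝ) (s : S) :
    ∑ a, pol s a * Adv γ P R V s a
      = ∑ a, pol s a * ∑ s', P s a s' * R s a s' + γ * (V ᵥ* Pmat P pol) s - V s := by
  have hnext : ∑ a, pol s a * ∑ s', P s a s' * (γ * V s') = γ * (V ᵥ* Pmat P pol) s := by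
    simp only [vecMul, dotProduct, Pmat, mul_sum]
    rw [sum_comm]
    exact sum_congr rfl fun _ _ => sum_congr rfl fun _ _ => by ring
  simp only [Adv, mul_sub, sum_sub_distrib, ← sum_mul, hpol1, one_mul, mul_add, sum_add_distrib,
    hnext]

theorem sum_mul_Adv_self_eq_zero (hpol1 : ∀ s, ∑ a, pol s a = 1) {R : S → A → S → ℝ} {V : S → ℝ}
    (hV : ∀ s, V s = ∑ a, pol s a * (∑ s', P s a s' * (R s a s' + γ * V s'))) (s : S) :
    ∑ a, pol s a * Adv γ P R V s a = 0 := by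
  simp only [Adv, mul_sub, sum_sub_distrib, ← sum_mul, hpol1, one_mul, ← hV s, sub_self]

variable [DecidableEq S]

theorem dFut_eq_smul_add_smul_mulVec (hM : Pmat P pol ∈ colStochastic ℝ S) (hγ : |γ| < 1) :
    dFut γ P μ pol = (1 - γ) • μ + γ • (Pmat P pol *ᵥ dFut γ P μ pol) := by
  have hd : dFut γ P μ pol = (1 - γ) • fun s => ∑' t : ℕ, γ ^ t * (Pmat P pol ^ t *ᵥ μ) s := rfl
  ext s
  conv_lhs => rw [hd, Pi.smul_apply, tsum_geometric_pow_mulVec_eq hM hγ μ s]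
  rw [hd, mulVec_smul]
  simp only [Pi.add_apply, Pi.smul_apply, smul_eq_mul]
  ring

theorem dFut_nonneg (hγ0 : 0 ≤ γ) (hγ1 : γ ≤ 1) (hM : Pmat P pol ∈ colStochastic ℝ S)
    (hμ0 : ∀ s, 0 ≤ μ s) (s : S) : 0 ≤ dFut γ P μ pol s :=
  mul_nonneg (sub_nonneg.2 hγ1) (tsum_nonneg fun t => mul_nonneg (pow_nonneg hγ0 t)
    (nonneg_mulVec_of_mem_colStochastic (pow_mem hM t) hμ0 s))

theorem dFut_sub_dFut_eq (hM : Pmat P pol ∈ colStochastic ℝ S)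
    (hM' : Pmat P pol' ∈ colStochastic ℝ S) (hγ : |γ| < 1) :
    dFut γ P μ pol' - dFut γ P μ pol
      = γ • (Pmat P pol' *ᵥ (dFut γ P μ pol' - dFut γ P μ pol)
          + (Pmat P pol' - Pmat P pol) *ᵥ dFut γ P μ pol) := by
  conv_lhs => rw [dFut_eq_smul_add_smul_mulVec hM' hγ, dFut_eq_smul_add_smul_mulVec hM hγ]
  rw [mulVec_sub, sub_mulVec]
  module

theorem sum_abs_dFut_sub_dFut_le (hγ0 : 0 ≤ γ) (hγ1 : γ < 1) (hP0 : ∀ s a s', 0 ≤ P s a s')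
    (hP1 : ∀ s a, ∑ s', P s a s' = 1) (hμ0 : ∀ s, 0 ≤ μ s)
    (hM : Pmat P pol ∈ colStochastic ℝ S) (hM' : Pmat P pol' ∈ colStochastic ℝ S) :
    (1 - γ) * ∑ s, |dFut γ P μ pol' s - dFut γ P μ pol s|
      ≤ 2 * γ * ∑ s, dFut γ P μ pol s * DTV pol' pol s := by
  set d := dFut γ P μ pol
  set d' := dFut γ P μ pol'
  have hγ : |γ| < 1 := abs_lt.2 ⟨by linarith, hγ1⟩
  have hd0 : ∀ s, 0 ≤ d s := dFut_nonneg hγ0 hγ1.le hM hμ0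
  have hchange : ∑ s, |((Pmat P pol' - Pmat P pol) *ᵥ d) s| ≤ 2 * ∑ s, d s * DTV pol' pol s := by
    refine (sum_abs_mulVec_le _ d).trans ?_
    rw [mul_sum]
    refine sum_le_sum fun s _ => ?_
    simp_rw [Matrix.sub_apply, abs_of_nonneg (hd0 s)]
    nlinarith [sum_abs_Pmat_sub_Pmat_le (pol := pol) (pol' := pol') hP0 hP1 s, hd0 s]
  have hcontract := sum_abs_mulVec_le_of_mem_colStochastic hM' (d' - d)
  have hstep : ∑ s, |d' s - d s|
      ≤ γ * (∑ s, |(d' - d) s| + 2 * ∑ s, d s * DTV pol' pol s) :=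
    calc ∑ s, |d' s - d s|
        = γ * ∑ s, |(Pmat P pol' *ᵥ (d' - d)) s + ((Pmat P pol' - Pmat P pol) *ᵥ d) s| := by
          rw [mul_sum]
          refine sum_congr rfl fun s _ => ?_
          have h := congrFun (dFut_sub_dFut_eq (μ := μ) hM hM' hγ) s
          simp only [Pi.sub_apply, Pi.add_apply, Pi.smul_apply, smul_eq_mul] at h
          rw [h, abs_mul, abs_of_nonneg hγ0]
      _ ≤ γ * (∑ s, |(Pmat P pol' *ᵥ (d' - d)) s|
            + ∑ s, |((Pmat P pol' - Pmat P pol) *ᵥ d) s|) := by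
          rw [← sum_add_distrib]
          exact mul_le_mul_of_nonneg_left (sum_le_sum fun s _ => abs_add_le _ _) hγ0
      _ ≤ γ * (∑ s, |(d' - d) s| + 2 * ∑ s, d s * DTV pol' pol s) := by gcongr
  simp only [Pi.sub_apply] at hstep
  linarith

theorem sum_dFut_mul_le_sum_dFut_mul_add (hγ0 : 0 ≤ γ) (hγ1 : γ < 1)
    (hP0 : ∀ s a s', 0 ≤ P s a s') (hP1 : ∀ s a, ∑ s', P s a s' = 1) (hμ0 : ∀ s, 0 ≤ μ s)
    (hM : Pmat P pol ∈ colStochastic ℝ S) (hM' : Pmat P pol' ∈ colStochastic ℝ S) (g : S → ℝ) :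
    ∑ s, dFut γ P μ pol s * g s ≤ ∑ s, dFut γ P μ pol' s * g s
      + 2 * γ * (⨆ s, |g s|) / (1 - γ) * ∑ s, dFut γ P μ pol s * DTV pol' pol s := by
  set d := dFut γ P μ pol
  set d' := dFut γ P μ pol'
  have hshift := sum_abs_dFut_sub_dFut_le hγ0 hγ1 hP0 hP1 hμ0 hM hM'
  have hgap : ∑ s, d s * g s - ∑ s, d' s * g s ≤ (⨆ s, |g s|) * ∑ s, |d' s - d s| := by
    rw [← sum_sub_distrib]
    simp_rw [← sub_mul]
    refine (sum_mul_le_iSup_abs_mul_sum_abs (d - d') g).trans_eq ?_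
    simp only [Pi.sub_apply, abs_sub_comm (d _)]
  have hcost : (⨆ s, |g s|) * ∑ s, |d' s - d s|
      ≤ 2 * γ * (⨆ s, |g s|) / (1 - γ) * ∑ s, d s * DTV pol' pol s := by
    rw [div_mul_eq_mul_div, le_div_iff₀ (by linarith)]
    nlinarith [mul_le_mul_of_nonneg_left hshift (Real.iSup_nonneg fun s => abs_nonneg (g s))]
  linarith

/-- The performance difference lemma, for an arbitrary baseline `V`. -/
theorem Jret_eq_add_sum_dFut_mul_Adv (hM : Pmat P pol ∈ colStochastic ℝ S) (hγ : |γ| < 1)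
    (hpol1 : ∀ s, ∑ a, pol s a = 1) (R : S → A → S → ℝ) (V : S → ℝ) :
    Jret γ P R μ pol = ∑ s, μ s * V s
      + 1 / (1 - γ) * ∑ s, dFut γ P μ pol s * ∑ a, pol s a * Adv γ P R V s a := by
  rw [Jret]
  set d := dFut γ P μ pol
  have hγ1 : 1 - γ ≠ 0 := by linarith [(abs_lt.1 hγ).2]
  have hrec (s : S) : γ * (Pmat P pol *ᵥ d) s = d s - (1 - γ) * μ s := by
    have h := congrFun (dFut_eq_smul_add_smul_mulVec (μ := μ) hM hγ) s
    simp only [Pi.add_apply, Pi.smul_apply, smul_eq_mul] at h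
    linarith
  have hdual : ∑ s, d s * (γ * (V ᵥ* Pmat P pol) s) = ∑ s, (d s - (1 - γ) * μ s) * V s := by
    simp_rw [← hrec, mul_left_comm _ γ, ← mul_sum, mul_assoc, ← mul_sum]
    rw [← dotProduct, dotProduct_comm, ← dotProduct_mulVec, dotProduct_comm]
    rfl
  simp only [sum_mul_Adv_eq hpol1, mul_sub, mul_add, sum_sub_distrib, sum_add_distrib, hdual,
    sub_mul]
  simp only [mul_assoc, ← mul_sum]
  field_simp
  ring

end MDP

theorem policy_improvement_lower_bound_general
    [Fintype S] [DecidableEq S] [Fintype A]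
    (γ : ℝ) (hγ0 : 0 ≤ γ) (hγ1 : γ < 1)
    (P : S → A → S → ℝ) (hP0 : ∀ s a s', 0 ≤ P s a s')
    (hP1 : ∀ s a, (∑ s', P s a s') = 1)
    (μ : S → ℝ) (hμ0 : ∀ s, 0 ≤ μ s)
    (R : S → A → S → ℝ)
    (pol pol' : S → A → ℝ)
    (hpol0 : ∀ s a, 0 ≤ pol s a) (hpol1 : ∀ s, (∑ a, pol s a) = 1)
    (hpol'0 : ∀ s a, 0 ≤ pol' s a) (hpol'1 : ∀ s, (∑ a, pol' s a) = 1)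
    (V : S → ℝ)
    (hV : ∀ s, V s = ∑ a, pol s a * (∑ s', P s a s' * (R s a s' + γ * V s'))) :
    Jret γ P R μ pol' - Jret γ P R μ pol
      ≥ (1 / (1 - γ)) * ∑ s, dFut γ P μ pol s *
          (∑ a, pol' s a *
            (Adv γ P R V s a
              - 2 * γ * (⨆ t, |∑ a', pol' t a' * Adv γ P R V t a'|) / (1 - γ)
                  * DTV pol' pol s)) := by
  have hγ : |γ| < 1 := abs_lt.2 ⟨by linarith, hγ1⟩
  have hM := Pmat_mem_colStochastic hP0 hP1 hpol0 hpol1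
  have hM' := Pmat_mem_colStochastic hP0 hP1 hpol'0 hpol'1
  have hJ : Jret γ P R μ pol = ∑ s, μ s * V s := by
    simp [Jret_eq_add_sum_dFut_mul_Adv hM hγ hpol1 R V, sum_mul_Adv_self_eq_zero hpol1 hV]
  rw [Jret_eq_add_sum_dFut_mul_Adv hM' hγ hpol'1 R V, hJ, ge_iff_le, add_sub_cancel_left]
  refine mul_le_mul_of_nonneg_left ?_ (by positivity)
  simp only [mul_sub, sum_sub_distrib, ← sum_mul, hpol'1, one_mul]
  have hshift := sum_dFut_mul_le_sum_dFut_mul_add hγ0 hγ1 hP0 hP1 hμ0 hM hM'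
    fun s => ∑ a, pol' s a * Adv γ P R V s a
  simp_rw [mul_left_comm (dFut γ P μ pol _), ← mul_sum] at hshift ⊢
  linarith

/-- **Corollary 1.** For any two policies, with `ε^{π'} = max_s |E_{a∼π'}[A^π(s,a)]|`,
`J(π') - J(π) ≥ (1/(1-γ)) E_{s∼d^π, a∼π'}[A^π(s,a) - (2γε^{π'}/(1-γ)) D_TV(π'‖π)[s]]`. -/
theorem policy_improvement_lower_bound
    [Fintype S] [DecidableEq S] [Nonempty S] [Fintype A] [Nonempty A]
    (γ : ℝ) (hγ0 : 0 ≤ γ) (hγ1 : γ < 1)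
    (P : S → A → S → ℝ) (hP0 : ∀ s a s', 0 ≤ P s a s')
    (hP1 : ∀ s a, (∑ s', P s a s') = 1)
    (μ : S → ℝ) (hμ0 : ∀ s, 0 ≤ μ s) (hμ1 : (∑ s, μ s) = 1)
    (R : S → A → S → ℝ)
    (pol pol' : S → A → ℝ)
    (hpol0 : ∀ s a, 0 ≤ pol s a) (hpol1 : ∀ s, (∑ a, pol s a) = 1)
    (hpol'0 : ∀ s a, 0 ≤ pol' s a) (hpol'1 : ∀ s, (∑ a, pol' s a) = 1)
    (V : S → ℝ)
    (hV : ∀ s, V s = ∑ a, pol s a * (∑ s', P s a s' * (R s a s' + γ * V s'))) :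
    Jret γ P R μ pol' - Jret γ P R μ pol
      ≥ (1 / (1 - γ)) * ∑ s, dFut γ P μ pol s *
          (∑ a, pol' s a *
            (Adv γ P R V s a
              - 2 * γ * (⨆ t, |∑ a', pol' t a' * Adv γ P R V t a'|) / (1 - γ)
                  * DTV pol' pol s)) :=
  policy_improvement_lower_bound_general γ hγ0 hγ1 P hP0 hP1 μ hμ0 R pol pol' hpol0 hpol1 hpol'0
    hpol'1 V hV
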